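/- arXiv:1001.3749 — 2 statements merged into one kernel-verified Lean document; each statement's English description precedes it below -/
import Mathlib

section
/- Let G be a directed graph on a finite vertex set V with edge set E ⊆ V × V, where each edge e carries an affine weight w_e(x) = a_e·x + b_e, and let α ≤ β be reals. Suppose that for every r with α ≤ r ≤ β, every cycle of G(r) has nonnegative weight. Then there exist reals c_v, d_v for each vertex v, defining affine functions g_v(x) = c_v·x + d_v, such that for every r with α ≤ r ≤ β and every edge (u,v) ∈ E, w_{(u,v)}(r) + g_u(r) − g_v(r) ≥ 0. -/
/-- `p` is a walk from `u` to `v` in the digraph with vertex set `V` and edge set `E`: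
a nonempty list of vertices starting at `u`, ending at `v`, with consecutive pairs in `E`. -/
def IsWalk {V : Type*} (E : Set (V × V)) (u v : V) (p : List V) : Prop :=
  List.Chain' (fun x y => (x, y) ∈ E) p ∧ p.head? = some u ∧ p.getLast? = some v

/-- The weight of a walk: the sum of the edge weights over consecutive pairs,
counted with multiplicity. -/
def walkWeight {V : Type*} (w : V × V → ℝ) (p : List V) : ℝ :=
  ((List.zip p p.tail).map w).sum

/-- Every cycle (closed walk with at least one edge) has nonnegative weight. -/
def NonnegCycles {V : Type*} (E : Set (V × V)) (w : V × V → ℝ) : Prop :=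
  ∀ (u : V) (p : List V), IsWalk E u u p → 2 ≤ p.length → 0 ≤ walkWeight w p

/-!
When no cycle is negative, the weights of the walks ending at a vertex `v` are bounded below:
cutting a cycle out of a walk does not increase its weight, and walks without repeated vertices
are finitely many. Their infimum `p v`, the distance to `v` from a virtual source joined to every
vertex by a weight-zero edge, satisfies `p v ≤ p u + w (u, v)` on every edge. Taking such
potentials for `G(α)` and `G(β)` and interpolating `g_v` affinely between them, the reduced weight
of each edge is an affine function of `r` that is nonnegative at both ends of `[α, β]`, hence
throughout.
-/

namespace List

theorem exists_eq_append_cons_append_cons_of_not_nodup {α : Type*} {l : List α}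
    (h : ¬l.Nodup) : ∃ l₁ x l₂ l₃, l = l₁ ++ x :: (l₂ ++ x :: l₃) := by
  induction l with
  | nil => exact absurd nodup_nil h
  | cons y t ih =>
    by_cases hy : y ∈ t
    · obtain ⟨s, r, rfl⟩ := append_of_mem hy
      exact ⟨[], y, s, r, rfl⟩
    · obtain ⟨l₁, x, l₂, l₃, rfl⟩ := ih fun ht => h (nodup_cons.2 ⟨hy, ht⟩)
      exact ⟨y :: l₁, x, l₂, l₃, rfl⟩

end List

section Walks

variable {V : Type*} (E : Set (V × V)) (w : V × V → ℝ)

theorem walkWeight_cons_cons (x y : V) (l : List V) :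
    walkWeight w (x :: y :: l) = w (x, y) + walkWeight w (y :: l) := by
  simp [walkWeight]

theorem walkWeight_append_cons (l₁ : List V) (x : V) (l₂ : List V) :
    walkWeight w (l₁ ++ x :: l₂) = walkWeight w (l₁ ++ [x]) + walkWeight w (x :: l₂) := by
  induction l₁ with
  | nil => simp [walkWeight]
  | cons y t ih =>
    cases t with
    | nil => simp [walkWeight]
    | cons z t => simp only [List.cons_append, walkWeight_cons_cons] at ih ⊢; rw [ih, add_assoc]

theorem walkWeight_concat {l : List V} {u : V} (hl : l.getLast? = some u) (v : V) :
    walkWeight w (l ++ [v]) = walkWeight w l + w (u, v) := by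
  obtain ⟨l', rfl⟩ := List.getLast?_eq_some_iff.1 hl
  rw [List.append_assoc, List.singleton_append, walkWeight_append_cons,
    walkWeight_cons_cons]
  simp [walkWeight]

def walksTo (v : V) : Set (List V) :=
  {p | p.IsChain (fun x y => (x, y) ∈ E) ∧ p.getLast? = some v}

theorem exists_shorter_walkTo_of_not_nodup (hc : NonnegCycles E w) {v : V} {p : List V}
    (hp : p ∈ walksTo E v) (hnd : ¬p.Nodup) :
    ∃ q ∈ walksTo E v, q.length < p.length ∧ walkWeight w q ≤ walkWeight w p := by
  obtain ⟨hchain, hlast⟩ := hp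
  obtain ⟨l₁, x, l₂, l₃, rfl⟩ := List.exists_eq_append_cons_append_cons_of_not_nodup hnd
  have hcycle : IsWalk E x x (x :: l₂ ++ [x]) :=
    ⟨hchain.infix ⟨l₁, l₃, by simp⟩, rfl, List.getLast?_concat⟩
  have hcycle_nonneg := hc x _ hcycle (by simp)
  refine ⟨l₁ ++ x :: l₃, ⟨?_, ?_⟩, by simp, ?_⟩
  · rw [List.isChain_split] at hchain ⊢
    exact ⟨hchain.1, (List.isChain_cons_split.1 hchain.2).2⟩
  · rw [← hlast, List.getLast?_append, ← List.cons_append, ← List.append_assoc,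
      List.getLast?_append]
    simp only [List.getLast?_cons, Option.some_or]
  · have hsplit : walkWeight w (l₁ ++ x :: (l₂ ++ x :: l₃)) = walkWeight w (l₁ ++ [x]) +
        walkWeight w (x :: l₂ ++ [x]) + walkWeight w (x :: l₃) := by
      rw [walkWeight_append_cons, ← List.cons_append, walkWeight_append_cons w (x :: l₂),
        add_assoc]
    rw [hsplit, walkWeight_append_cons]
    linarith

noncomputable def minWalkWeightTo (v : V) : ℝ :=
  sInf (walkWeight w '' walksTo E v)

end Walks

section Potential

variable {V : Type*} [Fintype V] (E : Set (V × V)) (w : V × V → ℝ)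

theorem exists_walkTo_length_le_card (hc : NonnegCycles E w) {v : V} {p : List V}
    (hp : p ∈ walksTo E v) :
    ∃ q ∈ walksTo E v, q.length ≤ Fintype.card V ∧ walkWeight w q ≤ walkWeight w p := by
  induction hn : p.length using Nat.strong_induction_on generalizing p with
  | _ n ih =>
    by_cases hnd : p.Nodup
    · exact ⟨p, hp, hnd.length_le_card, le_rfl⟩
    · obtain ⟨q, hq, hlen, hle⟩ := exists_shorter_walkTo_of_not_nodup E w hc hp hnd
      obtain ⟨r, hr, hrlen, hrle⟩ := ih _ (hn ▸ hlen) hq rfl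
      exact ⟨r, hr, hrlen, hrle.trans hle⟩

theorem bddBelow_walkWeight_walksTo (hc : NonnegCycles E w) (v : V) :
    BddBelow (walkWeight w '' walksTo E v) := by
  obtain ⟨m, hm⟩ := ((List.finite_length_le V (Fintype.card V)).image (walkWeight w)).bddBelow
  refine ⟨m, ?_⟩
  rintro _ ⟨p, hp, rfl⟩
  obtain ⟨q, -, hq, hle⟩ := exists_walkTo_length_le_card E w hc hp
  exact (hm ⟨q, hq, rfl⟩).trans hle

theorem minWalkWeightTo_le_add (hc : NonnegCycles E w) {u v : V} (he : (u, v) ∈ E) :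
    minWalkWeightTo E w v ≤ minWalkWeightTo E w u + w (u, v) := by
  rw [← sub_le_iff_le_add]
  refine le_csInf ⟨_, [u], ⟨List.isChain_singleton u, rfl⟩, rfl⟩ ?_
  rintro _ ⟨p, ⟨hchain, hlast⟩, rfl⟩
  rw [sub_le_iff_le_add, ← walkWeight_concat w hlast]
  have hwalk : p ++ [v] ∈ walksTo E v :=
    ⟨List.isChain_append.2 ⟨hchain, List.isChain_singleton v, by simp_all⟩,
      List.getLast?_concat⟩
  exact csInf_le (bddBelow_walkWeight_walksTo E w hc v) ⟨_, hwalk, rfl⟩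

theorem exists_potential_of_nonnegCycles (hc : NonnegCycles E w) :
    ∃ p : V → ℝ, ∀ u v : V, (u, v) ∈ E → 0 ≤ w (u, v) + p u - p v :=
  ⟨minWalkWeightTo E w, fun _ _ he => by linarith [minWalkWeightTo_le_add E w hc he]⟩

end Potential

theorem affine_nonneg_of_nonneg_endpoints {A B α β r : ℝ} (hα : α ≤ r) (hβ : r ≤ β)
    (h₁ : 0 ≤ A * α + B) (h₂ : 0 ≤ A * β + B) : 0 ≤ A * r + B := by
  rcases le_or_gt 0 A with hA | hA
  · linarith [mul_le_mul_of_nonneg_left hα hA]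
  · linarith [mul_le_mul_of_nonpos_left hβ hA.le]

/-- (Lemma 1.2 of the paper, both endpoints finite.) If for every
`r ∈ [α, β]` every cycle of `G(r)` has nonnegative weight, then there are affine vertex
functions `g_v(x) = c_v·x + d_v` such that for every `r ∈ [α, β]` and every edge `(u,v)`,
`w₍u,v₎(r) + g_u(r) − g_v(r) ≥ 0`. -/
theorem statement6 {V : Type*} [Fintype V] (E : Set (V × V)) (a b : V × V → ℝ)
    (α β : ℝ) (hαβ : α ≤ β)
    (hcyc : ∀ r : ℝ, α ≤ r → r ≤ β → NonnegCycles E (fun e => a e * r + b e)) :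
    ∃ c d : V → ℝ, ∀ r : ℝ, α ≤ r → r ≤ β → ∀ u v : V, (u, v) ∈ E →
      0 ≤ (a (u, v) * r + b (u, v)) + (c u * r + d u) - (c v * r + d v) := by
  obtain ⟨p, hp⟩ := exists_potential_of_nonnegCycles E _ (hcyc α le_rfl hαβ)
  obtain ⟨q, hq⟩ := exists_potential_of_nonnegCycles E _ (hcyc β hαβ le_rfl)
  rcases hαβ.eq_or_lt with rfl | hlt
  · refine ⟨0, p, fun r h₁ h₂ u v he => ?_⟩
    obtain rfl := le_antisymm h₂ h₁
    simpa using hp u v he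
  set c : V → ℝ := fun v => (q v - p v) / (β - α)
  set d : V → ℝ := fun v => p v - c v * α
  have hgα : ∀ v, c v * α + d v = p v := fun v => by simp only [d]; ring
  have hgβ : ∀ v, c v * β + d v = q v := fun v => by
    simp only [c, d]; field_simp [(sub_pos.2 hlt).ne']; ring
  refine ⟨c, d, fun r h₁ h₂ u v he => ?_⟩
  have := affine_nonneg_of_nonneg_endpoints (A := a (u, v) + c u - c v)
    (B := b (u, v) + d u - d v) h₁ h₂ (by linarith [hp u v he, hgα u, hgα v])
    (by linarith [hq u v he, hgβ u, hgβ v])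
  linarith
end

section
/- Let d ≥ 1 and let f, g : ℝ → ℝ be piecewise polynomial functions: there are breakpoints b_1 < … < b_{t1} and polynomials p_0, …, p_{t1} of degree at most d such that f(x) = p_j(x) whenever x lies in the j-th interval determined by the breakpoints (with b_0 = −∞ and b_{t1+1} = +∞), and similarly g is given by breakpoints c_1 < … < c_{t2} and polynomials q_0, …, q_{t2} of degree at most d. Then the pointwise minimum min(f, g) admits such a piecewise polynomial representation with at most t1 + t2 + d·(t1 + t2 + 1) breakpoints, in which every piece is one of the polynomials p_j or q_j. -/
/-!
Merge the breakpoints of `f` and `g`: between consecutive merged breakpoints both functions are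
single polynomials `p` and `q`, and by the intermediate value theorem `min f g` can only switch
between them at a root of `p - q`. Adding the at most `d` roots of each difference `p - q` to the
merged breakpoints therefore gives a subdivision on each closed interval of which `min f g` is
`p` or `q`.
-/

open Finset Polynomial

/-- `f` is represented piecewise by the strictly increasing breakpoints
`b 0 < b 1 < … < b (t-1)` and the polynomials `p 0, …, p t`: on the `j`-th closed
interval determined by the breakpoints (with `b₋ = −∞` on the left and `b₊ = +∞`
on the right), `f` agrees with the polynomial `p j`. -/
def PiecewiseRep (f : ℝ → ℝ) {t : ℕ} (b : Fin t → ℝ)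
    (p : Fin (t + 1) → Polynomial ℝ) : Prop :=
  StrictMono b ∧
    ∀ (j : Fin (t + 1)) (x : ℝ),
      (∀ i : Fin t, (i : ℕ) < (j : ℕ) → b i ≤ x) →
      (∀ i : Fin t, (j : ℕ) ≤ (i : ℕ) → x ≤ b i) →
      f x = (p j).eval x

section PieceIdx

variable {α : Type*} [LinearOrder α] {n : ℕ}

noncomputable def pieceIdx (b : Fin n → α) (x : α) : Fin (n + 1) :=
  ⟨#{i | b i < x}, Nat.lt_succ_of_le ((card_filter_le _ _).trans (card_fin n).le)⟩

theorem lt_iff_lt_pieceIdx {b : Fin n → α} (hb : Monotone b) (x : α) (i : Fin n) :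
    b i < x ↔ (i : ℕ) < pieceIdx b x := by
  constructor
  · intro h
    have hsub : Iic i ⊆ ({i | b i < x} : Finset (Fin n)) := fun i' hi' ↦
      mem_filter.2 ⟨mem_univ _, (hb (mem_Iic.1 hi')).trans_lt h⟩
    simpa [pieceIdx] using card_le_card hsub
  · intro h
    by_contra! hle
    have hsub : ({i | b i < x} : Finset (Fin n)) ⊆ Iio i := fun i' hi' ↦
      mem_Iio.2 (hb.reflect_lt ((mem_filter.1 hi').2.trans_le hle))
    have := card_le_card hsub
    simp only [Fin.card_Iio] at this
    exact absurd h (not_lt.2 this)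

end PieceIdx

/-- `P w` is the polynomial agreeing with `f` on the closure of the gap of `S` containing `w`. -/
def GapwisePoly (S : Finset ℝ) (f : ℝ → ℝ) (P : ℝ → ℝ[X]) : Prop :=
  ∀ w ∉ S, ∀ x, (∀ c ∈ S, c ∉ Set.uIoo w x) → f x = (P w).eval x

variable {S : Finset ℝ} {f g : ℝ → ℝ}

theorem PiecewiseRep.gapwisePoly {t : ℕ} {b : Fin t → ℝ} {p : Fin (t + 1) → ℝ[X]}
    (hf : PiecewiseRep f b p) (hbS : ∀ i, b i ∈ S) :
    GapwisePoly S f (fun w ↦ p (pieceIdx b w)) := by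
  intro w hw x hx
  refine hf.2 _ x (fun i hi ↦ ?_) (fun i hi ↦ ?_)
  · have hiw : b i < w := (lt_iff_lt_pieceIdx hf.1.monotone w i).2 hi
    by_contra! hxi
    exact hx _ (hbS i) (Set.mem_uIoo_of_gt hxi hiw)
  · have hwi : w < b i := lt_of_le_of_ne
      (not_lt.1 fun h ↦ hi.not_gt ((lt_iff_lt_pieceIdx hf.1.monotone w i).1 h))
      (fun h ↦ hw (h ▸ hbS i))
    by_contra! hix
    exact hx _ (hbS i) (Set.mem_uIoo_of_lt hwi hix)

theorem exists_between_pieces {t : ℕ} {b : Fin t → ℝ} (hb : StrictMono b)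
    (j : Fin (t + 1)) :
    ∃ w, (∀ i : Fin t, (i : ℕ) < j → b i < w) ∧ ∀ i : Fin t, (j : ℕ) ≤ i → w < b i := by
  obtain ⟨w, hlo, hhi⟩ := Set.Finite.exists_between'
      (Set.toFinite (b '' {i | (i : ℕ) < j}))
      (Set.toFinite (b '' {i | (j : ℕ) ≤ i})) <| by
      rintro _ ⟨i, hi, rfl⟩ _ ⟨i', hi', rfl⟩
      exact hb (Fin.lt_def.2 (lt_of_lt_of_le hi hi'))
  exact ⟨w, fun i hi ↦ hlo _ ⟨i, hi, rfl⟩, fun i hi ↦ hhi _ ⟨i, hi, rfl⟩⟩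

theorem GapwisePoly.exists_piecewiseRep {P : ℝ → ℝ[X]} (hf : GapwisePoly S f P) :
    ∃ p, PiecewiseRep f (S.orderEmbOfFin rfl) p ∧ ∀ j, ∃ w, p j = P w := by
  set b := S.orderEmbOfFin rfl
  have hmem : ∀ c ∈ S, ∃ i, b i = c := fun c hc ↦ by
    rwa [← Set.mem_range, range_orderEmbOfFin]
  choose w hlo hhi using exists_between_pieces b.strictMono
  refine ⟨fun j ↦ P (w j), ⟨b.strictMono, fun j x hx₁ hx₂ ↦ hf (w j) ?_ x ?_⟩,
    fun j ↦ ⟨w j, rfl⟩⟩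
  · intro hw
    obtain ⟨i, hi⟩ := hmem _ hw
    rcases lt_or_ge (i : ℕ) j with h | h
    · exact (hlo j i h).ne hi
    · exact (hhi j i h).ne' hi
  · intro c hc hcw
    obtain ⟨i, rfl⟩ := hmem c hc
    simp only [Set.uIoo, Set.mem_Ioo, inf_lt_iff, lt_sup_iff] at hcw
    rcases lt_or_ge (i : ℕ) j with h | h
    · have := hlo j i h; have := hx₁ i h; grind
    · have := hhi j i h; have := hx₂ i h; grind

theorem le_of_lt_of_forall_uIoo_ne {u v : ℝ → ℝ} (hu : Continuous u) (hv : Continuous v)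
    {w x : ℝ} (hw : u w < v w) (h : ∀ y ∈ Set.uIoo w x, u y ≠ v y) : u x ≤ v x := by
  by_contra! hx
  have hφ : ContinuousOn (u - v) _ := (hu.sub hv).continuousOn (s := Set.uIcc w x)
  have h0 : (0 : ℝ) ∈ Set.Ioo ((u - v) w) ((u - v) x) := by simp [hw, hx]
  rcases le_total w x with hwx | hxw
  · obtain ⟨y, hy, hy0⟩ := intermediate_value_Ioo hwx (hφ.mono Set.Icc_subset_uIcc) h0
    exact h y (Set.Ioo_subset_uIoo hy) (sub_eq_zero.1 hy0)
  · obtain ⟨y, hy, hy0⟩ := intermediate_value_Ioo' hxw (hφ.mono Set.Icc_subset_uIcc') h0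
    exact h y (Set.Ioo_subset_uIoo' hy) (sub_eq_zero.1 hy0)

theorem GapwisePoly.min {P Q : ℝ → ℝ[X]} (hf : GapwisePoly S f P) (hg : GapwisePoly S g Q)
    (hroots : ∀ w ∉ S, ∀ y ∈ (P w - Q w).roots, y ∈ S) :
    GapwisePoly S (fun x ↦ min (f x) (g x))
      (fun w ↦ if (P w).eval w ≤ (Q w).eval w then P w else Q w) := by
  intro w hw x hx
  dsimp only
  rw [hf w hw x hx, hg w hw x hx]
  by_cases hPQ : P w = Q w
  · simp [hPQ]
  have hS : ∀ y, (P w).eval y = (Q w).eval y → y ∈ S := fun y hy ↦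
    hroots w hw y ((mem_roots (sub_ne_zero.2 hPQ)).2 (by simp [hy]))
  have hne : ∀ y ∈ Set.uIoo w x, (P w).eval y ≠ (Q w).eval y := fun y hy heq ↦
    hx y (hS y heq) hy
  split_ifs with hle
  · exact min_eq_left <| le_of_lt_of_forall_uIoo_ne (P w).continuous (Q w).continuous
      (lt_of_le_of_ne hle fun h ↦ hw (hS w h)) hne
  · exact min_eq_right <| le_of_lt_of_forall_uIoo_ne (Q w).continuous (P w).continuous
      (not_le.1 hle) fun y hy ↦ (hne y hy).symm

theorem card_biUnion_roots_le {R ι : Type*} [CommRing R] [IsDomain R] [DecidableEq R]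
    (s : Finset ι) (r : ι → R[X]) {d : ℕ} (hr : ∀ j ∈ s, (r j).natDegree ≤ d) :
    (s.biUnion fun j ↦ (r j).roots.toFinset).card ≤ s.card * d :=
  calc _ ≤ ∑ j ∈ s, (r j).roots.toFinset.card := card_biUnion_le
    _ ≤ ∑ _j ∈ s, d := sum_le_sum fun j hj ↦
      (Multiset.toFinset_card_le _).trans ((card_roots' _).trans (hr j hj))
    _ = s.card * d := by simp

theorem statement11_general (d t1 t2 : ℕ) (f g : ℝ → ℝ)
    (bf : Fin t1 → ℝ) (pf : Fin (t1 + 1) → Polynomial ℝ)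
    (bg : Fin t2 → ℝ) (pg : Fin (t2 + 1) → Polynomial ℝ)
    (hf : PiecewiseRep f bf pf) (hg : PiecewiseRep g bg pg)
    (hdf : ∀ j, (pf j).natDegree ≤ d) (hdg : ∀ j, (pg j).natDegree ≤ d) :
    ∃ (t : ℕ) (b : Fin t → ℝ) (p : Fin (t + 1) → Polynomial ℝ),
      t ≤ t1 + t2 + d * (t1 + t2 + 1) ∧
      PiecewiseRep (fun x => min (f x) (g x)) b p ∧
      ∀ j : Fin (t + 1), (∃ i, p j = pf i) ∨ (∃ i, p j = pg i) := by
  classical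
  set S₀ := univ.image bf ∪ univ.image bg
  have hbf : ∀ i, bf i ∈ S₀ := fun i ↦ by simp [S₀]
  have hbg : ∀ i, bg i ∈ S₀ := fun i ↦ by simp [S₀]
  obtain ⟨p, hp, hp_pf⟩ := (hf.gapwisePoly hbf).exists_piecewiseRep
  obtain ⟨q, hq, hq_pg⟩ := (hg.gapwisePoly hbg).exists_piecewiseRep
  set S := S₀ ∪ univ.biUnion fun j ↦ (p j - q j).roots.toFinset
  have hS₀S : ∀ i, S₀.orderEmbOfFin rfl i ∈ S :=
    fun i ↦ mem_union_left _ (orderEmbOfFin_mem _ _ _)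
  have hroots : ∀ j, ∀ y ∈ (p j - q j).roots, y ∈ S := fun j y hy ↦
    mem_union_right _ (mem_biUnion.2 ⟨j, mem_univ _, Multiset.mem_toFinset.2 hy⟩)
  obtain ⟨r, hr, hr_pq⟩ := ((hp.gapwisePoly hS₀S).min (hq.gapwisePoly hS₀S)
    fun _ _ ↦ hroots _).exists_piecewiseRep
  refine ⟨S.card, _, r, ?_, hr, fun j ↦ ?_⟩
  · have hdeg : ∀ j ∈ univ, (p j - q j).natDegree ≤ d := fun j _ ↦ by
      obtain ⟨_, hpj⟩ := hp_pf j
      obtain ⟨_, hqj⟩ := hq_pg j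
      exact (natDegree_sub_le _ _).trans (max_le (hpj ▸ hdf _) (hqj ▸ hdg _))
    have hS₀ : S₀.card ≤ t1 + t2 := (card_union_le _ _).trans <|
      add_le_add (card_image_le.trans (by simp)) (card_image_le.trans (by simp))
    have hroots_card := card_biUnion_roots_le univ _ hdeg
    rw [card_univ, Fintype.card_fin] at hroots_card
    calc S.card ≤ S₀.card + (S₀.card + 1) * d := (card_union_le _ _).trans (by omega)
      _ ≤ t1 + t2 + d * (t1 + t2 + 1) := by rw [mul_comm]; gcongr
  · obtain ⟨w, hw⟩ := hr_pq j
    rw [hw]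
    split_ifs
    · obtain ⟨_, h⟩ := hp_pf (pieceIdx _ w)
      exact Or.inl ⟨_, h⟩
    · obtain ⟨_, h⟩ := hq_pg (pieceIdx _ w)
      exact Or.inr ⟨_, h⟩

/-- (Claim 3.4(b).) If `f` and `g` are piecewise polynomial with
`t1` resp. `t2` breakpoints and pieces of degree at most `d` (`d ≥ 1`), then the
pointwise minimum `min(f, g)` is piecewise polynomial with at most
`t1 + t2 + d·(t1 + t2 + 1)` breakpoints, each piece being one of the original
polynomials. -/
theorem statement11 (d t1 t2 : ℕ) (hd : 1 ≤ d) (f g : ℝ → ℝ)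
    (bf : Fin t1 → ℝ) (pf : Fin (t1 + 1) → Polynomial ℝ)
    (bg : Fin t2 → ℝ) (pg : Fin (t2 + 1) → Polynomial ℝ)
    (hf : PiecewiseRep f bf pf) (hg : PiecewiseRep g bg pg)
    (hdf : ∀ j, (pf j).natDegree ≤ d) (hdg : ∀ j, (pg j).natDegree ≤ d) :
    ∃ (t : ℕ) (b : Fin t → ℝ) (p : Fin (t + 1) → Polynomial ℝ),
      t ≤ t1 + t2 + d * (t1 + t2 + 1) ∧
      PiecewiseRep (fun x => min (f x) (g x)) b p ∧
      ∀ j : Fin (t + 1), (∃ i, p j = pf i) ∨ (∃ i, p j = pg i) :=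
  statement11_general d t1 t2 f g bf pf bg pg hf hg hdf hdg
end
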